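/- Let n ≥ 2 and consider the coupled reduced-state system on a connected weighted graph. Let λ_m(Q) > 0 be the smallest nonzero eigenvalue of the graph Laplacian Q, and let ‖ℒ‖ := max_{1≤j≤n} of the operator norm of ℒ_j with respect to the Frobenius norm on ℂ^{2×2}. Then for every K > 0 and every K-solution (ρ_1,…,ρ_n), one has for all t ≥ 0: √(Σ_{j=1}^n ‖ρ_j(t) − ρ̄(t)‖_F²) ≤ e^{−Kλ_m(Q)t} √(Σ_{j=1}^n ‖ρ_j(0) − ρ̄(0)‖_F²) + n‖ℒ‖/(Kλ_m(Q)). -/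

import Mathlib

/-!
Write `eⱼ = ρⱼ - ρ̄` and `V = ∑ⱼ ‖eⱼ‖²`. Since `∑ⱼ eⱼ = 0`, the mean drops out of
`V' = 2 ∑ⱼ ⟪eⱼ, ρ̇ⱼ⟫ = 2 ∑ⱼ ⟪eⱼ, ℒⱼ ρⱼ⟫ + 2K ∑ⱼ ⟪eⱼ, ∑ₖ aⱼₖ (eₖ - eⱼ)⟫`. Density matrices have
Frobenius norm at most `1`, so the first sum is at most `√n ‖ℒ‖ √V` (Cauchy–Schwarz). The second
equals `-(K/2) ∑ⱼₖ aⱼₖ ‖eⱼ - eₖ‖²`, which the spectral gap `λₘ(Q)`, applied coordinatewise to the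
mean-zero family `(eⱼ)`, bounds by `-K λₘ(Q) V`. Thus `V' ≤ 2 √n ‖ℒ‖ √V - 2 K λₘ(Q) V`, and
comparing `√V` with the solution of `w' = -K λₘ(Q) w + √n ‖ℒ‖` gives the bound, as `√n ≤ n`.
-/

open Finset Matrix
open scoped ComplexOrder

attribute [local instance] Matrix.frobeniusSeminormedAddCommGroup
  Matrix.frobeniusNormedAddCommGroup Matrix.frobeniusNormedSpace

noncomputable section

/-- 2×2 complex matrices (single-qubit operators), with the Frobenius norm. -/
abbrev Mat2 : Type := Matrix (Fin 2) (Fin 2) ℂ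

/-- The Lindblad dissipator `D(L)ρ = LρL† − (1/2)(L†Lρ + ρL†L)`. -/
def dissip (L X : Mat2) : Mat2 :=
  L * X * Lᴴ - (1 / 2 : ℂ) • (Lᴴ * L * X + X * (Lᴴ * L))

/-- The local Lindblad generator `ℒρ = −(i/ℏ)[H,ρ] + Σ_l γ_l D(L_l)ρ`. -/
def lind {ι : Type} [Fintype ι] (hbar : ℝ) (H : Mat2) (γ : ι → ℝ) (L : ι → Mat2)
    (X : Mat2) : Mat2 :=
  (-(Complex.I / (hbar : ℂ))) • (H * X - X * H) + ∑ l, (γ l : ℂ) • dissip (L l) X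

/-- The graph Laplacian of the weight matrix `a`. -/
def lap {n : ℕ} (a : Fin n → Fin n → ℝ) : Matrix (Fin n) (Fin n) ℝ :=
  Matrix.of fun j k => if j = k then ∑ l, a j l else -(a j k)

open scoped RealInnerProductSpace

section Diffusion

variable {E : Type*} [AddCommGroup E] [Module ℝ E] {n : ℕ}

/-- The coupling term of the network; it equals `-(lap a ⊗ id) x` when `a` has zero diagonal. -/
def diffusion (a : Fin n → Fin n → ℝ) (x : Fin n → E) (j : Fin n) : E :=
  ∑ k, a j k • (x k - x j)

def deviation (x : Fin n → E) (j : Fin n) : E :=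
  x j - (n : ℝ)⁻¹ • ∑ i, x i

theorem sum_deviation_eq_zero (x : Fin n → E) : ∑ j, deviation x j = 0 := by
  rcases eq_or_ne n 0 with rfl | hn
  · simp
  · simp only [deviation, Finset.sum_sub_distrib, Finset.sum_const, Finset.card_univ,
      Fintype.card_fin, ← Nat.cast_smul_eq_nsmul ℝ, smul_smul,
      mul_inv_cancel₀ (Nat.cast_ne_zero (R := ℝ) |>.mpr hn), one_smul, sub_self]

theorem diffusion_deviation (a : Fin n → Fin n → ℝ) (x : Fin n → E) :
    diffusion a (deviation x) = diffusion a x := by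
  ext j
  simp [diffusion, deviation]

end Diffusion

theorem sum_inner_diffusion {E : Type*} [NormedAddCommGroup E] [InnerProductSpace ℝ E] {n : ℕ}
    {a : Fin n → Fin n → ℝ} (ha_symm : ∀ j k, a j k = a k j)
    (x : Fin n → E) :
    ∑ j, ⟪x j, diffusion a x j⟫ = -(1 / 2) * ∑ j, ∑ k, a j k * ‖x j - x k‖ ^ 2 := by
  have hswap : ∑ j, ∑ k, a j k * ⟪x j, x k - x j⟫ = ∑ j, ∑ k, a j k * ⟪x k, x j - x k⟫ := by
    rw [Finset.sum_comm]
    simp_rw [ha_symm]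
  have hpair (j k : Fin n) : ⟪x j, x k - x j⟫ + ⟪x k, x j - x k⟫ = -‖x j - x k‖ ^ 2 := by
    rw [← real_inner_self_eq_norm_sq]
    simp only [inner_sub_left, inner_sub_right, real_inner_comm (x j) (x k)]
    ring
  simp only [diffusion, inner_sum, inner_smul_right]
  have htotal : ∑ j, ∑ k, a j k * ⟪x j, x k - x j⟫ + ∑ j, ∑ k, a j k * ⟪x k, x j - x k⟫ =
      -∑ j, ∑ k, a j k * ‖x j - x k‖ ^ 2 := by
    simp only [← Finset.sum_add_distrib, ← mul_add, hpair, mul_neg, Finset.sum_neg_distrib]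
  linarith

section Laplacian

variable {n : ℕ} {a : Fin n → Fin n → ℝ}

theorem lap_mulVec_apply (ha_diag : ∀ j, a j j = 0) (v : Fin n → ℝ) (j : Fin n) :
    (lap a *ᵥ v) j = ∑ k, a j k * (v j - v k) := by
  have hlap : lap a = diagonal (fun j => ∑ l, a j l) - of a := by
    ext j k
    by_cases h : j = k
    · subst h; simp [lap, ha_diag]
    · simp [lap, h]
  rw [hlap, sub_mulVec, Pi.sub_apply, mulVec_diagonal]
  simp only [mulVec, dotProduct, of_apply, mul_sub, Finset.sum_sub_distrib, Finset.sum_mul]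

theorem dotProduct_lap_mulVec (ha_symm : ∀ j k, a j k = a k j) (ha_diag : ∀ j, a j j = 0)
    (v : Fin n → ℝ) :
    v ⬝ᵥ (lap a *ᵥ v) = (1 / 2) * ∑ j, ∑ k, a j k * (v j - v k) ^ 2 := by
  have := sum_inner_diffusion ha_symm v
  simp only [diffusion, RCLike.inner_apply, conj_trivial, Real.norm_eq_abs, sq_abs] at this
  have hrow (j : Fin n) :
      v j * ∑ k, a j k * (v j - v k) = -((∑ k, a j k • (v k - v j)) * v j) := by
    simp only [smul_eq_mul, Finset.mul_sum, Finset.sum_mul, ← Finset.sum_neg_distrib]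
    exact Finset.sum_congr rfl fun k _ => by ring
  simp only [dotProduct, lap_mulVec_apply ha_diag, hrow, Finset.sum_neg_distrib, this]
  ring

theorem lap_isHermitian (ha_symm : ∀ j k, a j k = a k j) : (lap a).IsHermitian := by
  ext j k
  by_cases h : j = k
  · subst h; simp [lap]
  · simp [lap, h, Ne.symm h, ha_symm j k]

theorem eq_of_lap_mulVec_eq_zero (ha_nonneg : ∀ j k, 0 ≤ a j k)
    (ha_symm : ∀ j k, a j k = a k j) (ha_diag : ∀ j, a j j = 0)
    (ha_conn : (SimpleGraph.fromRel fun j k => 0 < a j k).Connected)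
    {v : Fin n → ℝ} (hv : lap a *ᵥ v = 0) (j k : Fin n) : v j = v k := by
  have hterms : ∀ j k, a j k * (v j - v k) ^ 2 = 0 := by
    have h := dotProduct_lap_mulVec ha_symm ha_diag v
    rw [hv, dotProduct_zero] at h
    have hnn : ∀ j k, 0 ≤ a j k * (v j - v k) ^ 2 := fun j k => by
      have := ha_nonneg j k; positivity
    intro j k
    have hrow := (Finset.sum_eq_zero_iff_of_nonneg fun j _ => Finset.sum_nonneg
      fun k _ => hnn j k).mp (by linarith) j (Finset.mem_univ _)
    exact (Finset.sum_eq_zero_iff_of_nonneg fun k _ => hnn j k).mp hrow k (Finset.mem_univ _)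
  have hadj : ∀ j k, 0 < a j k → v j = v k := fun j k hpos => by
    have := hterms j k
    have : v j - v k = 0 := by simpa [hpos.ne'] using this
    linarith
  have hreach := (SimpleGraph.reachable_iff_reflTransGen j k).mp (ha_conn.preconnected j k)
  induction hreach with
  | refl => rfl
  | tail _ hstep ih =>
    rcases ((SimpleGraph.fromRel_adj _ _ _).mp hstep).2 with h | h
    · exact ih.trans (hadj _ _ h)
    · exact ih.trans (hadj _ _ h).symm

theorem Matrix.IsHermitian.mul_dotProduct_self_le {m : Type*} [Fintype m] [DecidableEq m]
    {Q : Matrix m m ℝ} (hQ : Q.IsHermitian) {lam : ℝ}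
    (hlam : lam ∈ lowerBounds {r : ℝ | r ≠ 0 ∧ ∃ w : m → ℝ, w ≠ 0 ∧ Q *ᵥ w = r • w})
    {v : m → ℝ} (hv : ∀ w, Q *ᵥ w = 0 → w ⬝ᵥ v = 0) :
    lam * (v ⬝ᵥ v) ≤ v ⬝ᵥ (Q *ᵥ v) := by
  set b := hQ.eigenvectorBasis
  set c : m → ℝ := fun i => (b i).ofLp ⬝ᵥ v
  have hQt : Qᵀ = Q := by rw [← conjTranspose_eq_transpose_of_trivial]; exact hQ
  have hQc (i : m) : (b i).ofLp ⬝ᵥ (Q *ᵥ v) = hQ.eigenvalues i * c i := by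
    rw [dotProduct_mulVec, ← mulVec_transpose, hQt, hQ.mulVec_eigenvectorBasis, smul_dotProduct,
      smul_eq_mul]
  have hparseval (y : m → ℝ) : v ⬝ᵥ y = ∑ i, c i * ((b i).ofLp ⬝ᵥ y) := by
    have hinner (x y : m → ℝ) : ⟪WithLp.toLp 2 x, WithLp.toLp 2 y⟫ = x ⬝ᵥ y := by
      simp [PiLp.inner_apply, dotProduct, mul_comm]
    rw [← hinner, ← b.sum_inner_mul_inner]
    refine Finset.sum_congr rfl fun i _ => ?_
    rw [real_inner_comm]
    simp only [c, ← hinner, WithLp.toLp_ofLp]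
  rw [hparseval v, hparseval (Q *ᵥ v), Finset.mul_sum]
  refine Finset.sum_le_sum fun i _ => ?_
  rw [hQc]
  by_cases hμ : hQ.eigenvalues i = 0
  · have hc : c i = 0 := hv _ (by rw [hQ.mulVec_eigenvectorBasis, hμ, zero_smul])
    simp [hc]
  · have hb : (b i).ofLp ≠ 0 := fun h =>
      b.orthonormal.ne_zero i (by simpa using congrArg (WithLp.toLp 2) h)
    have := hlam ⟨hμ, (b i).ofLp, hb, hQ.mulVec_eigenvectorBasis i⟩
    nlinarith [sq_nonneg (c i)]

theorem lam_mul_sum_sq_le_of_sum_eq_zero (ha_nonneg : ∀ j k, 0 ≤ a j k)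
    (ha_symm : ∀ j k, a j k = a k j) (ha_diag : ∀ j, a j j = 0)
    (ha_conn : (SimpleGraph.fromRel fun j k => 0 < a j k).Connected) {lam : ℝ}
    (hlam : lam ∈ lowerBounds {r : ℝ | r ≠ 0 ∧ ∃ w : Fin n → ℝ, w ≠ 0 ∧ lap a *ᵥ w = r • w})
    {v : Fin n → ℝ} (hv : ∑ j, v j = 0) :
    lam * ∑ j, v j ^ 2 ≤ (1 / 2) * ∑ j, ∑ k, a j k * (v j - v k) ^ 2 := by
  have hker (w : Fin n → ℝ) (hw : lap a *ᵥ w = 0) : w ⬝ᵥ v = 0 := by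
    obtain ⟨j₀⟩ := ha_conn.nonempty
    simp only [dotProduct, eq_of_lap_mulVec_eq_zero ha_nonneg ha_symm ha_diag ha_conn hw _ j₀,
      ← Finset.mul_sum, hv, mul_zero]
  have h := (lap_isHermitian ha_symm).mul_dotProduct_self_le hlam hker
  rw [dotProduct_lap_mulVec ha_symm ha_diag] at h
  simpa only [dotProduct, sq] using h

theorem lam_mul_sum_norm_sq_le_of_sum_eq_zero {E : Type*} [NormedAddCommGroup E]
    [InnerProductSpace ℝ E] [FiniteDimensional ℝ E] (ha_nonneg : ∀ j k, 0 ≤ a j k)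
    (ha_symm : ∀ j k, a j k = a k j) (ha_diag : ∀ j, a j j = 0)
    (ha_conn : (SimpleGraph.fromRel fun j k => 0 < a j k).Connected) {lam : ℝ}
    (hlam : lam ∈ lowerBounds {r : ℝ | r ≠ 0 ∧ ∃ w : Fin n → ℝ, w ≠ 0 ∧ lap a *ᵥ w = r • w})
    {x : Fin n → E} (hx : ∑ j, x j = 0) :
    lam * ∑ j, ‖x j‖ ^ 2 ≤ (1 / 2) * ∑ j, ∑ k, a j k * ‖x j - x k‖ ^ 2 := by
  set b := stdOrthonormalBasis ℝ E
  have hnorm (z : E) : ‖z‖ ^ 2 = ∑ i, ⟪b i, z⟫ ^ 2 := by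
    simp [← b.sum_sq_norm_inner_right z]
  have hcoord (i) := lam_mul_sum_sq_le_of_sum_eq_zero ha_nonneg ha_symm ha_diag ha_conn hlam
    (v := fun j => ⟪b i, x j⟫) (by rw [← inner_sum, hx, inner_zero_right])
  calc lam * ∑ j, ‖x j‖ ^ 2 = ∑ i, lam * ∑ j, ⟪b i, x j⟫ ^ 2 := by
        simp_rw [hnorm]; rw [Finset.sum_comm, Finset.mul_sum]
    _ ≤ ∑ i, (1 / 2) * ∑ j, ∑ k, a j k * (⟪b i, x j⟫ - ⟪b i, x k⟫) ^ 2 :=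
        Finset.sum_le_sum fun i _ => hcoord i
    _ = (1 / 2) * ∑ j, ∑ k, a j k * ‖x j - x k‖ ^ 2 := by
        simp_rw [hnorm, inner_sub_right, Finset.mul_sum]
        rw [Finset.sum_comm]
        exact Finset.sum_congr rfl fun j _ => Finset.sum_comm

end Laplacian

section Comparison

open Real

theorem le_of_hasDerivAt_le_neg_mul_add {w w' : ℝ → ℝ} {α β : ℝ} (hα : α ≠ 0)
    (hw : ∀ s ≥ 0, HasDerivAt w (w' s) s) (hw' : ∀ s ≥ 0, w' s ≤ -α * w s + β)
    {t : ℝ} (ht : 0 ≤ t) : w t ≤ exp (-α * t) * (w 0 - β / α) + β / α := by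
  have h := le_gronwallBound_of_liminf_deriv_right_le (f := w) (f' := w') (b := t)
    (fun s hs => (hw s hs.1).continuousAt.continuousWithinAt)
    (fun s hs _ hr => (hw s hs.1).hasDerivWithinAt.liminf_right_slope_le hr)
    le_rfl (fun s hs => hw' s hs.1) t ⟨ht, le_rfl⟩
  rw [gronwallBound_of_K_ne_0 (neg_ne_zero.mpr hα), sub_zero] at h
  convert h using 1
  field_simp
  ring

theorem sqrt_le_of_hasDerivAt_le {V V' : ℝ → ℝ} {α c : ℝ} (hα : 0 < α) (hc : 0 ≤ c)
    (hV_nonneg : ∀ s ≥ 0, 0 ≤ V s) (hV : ∀ s ≥ 0, HasDerivAt V (V' s) s)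
    (hV' : ∀ s ≥ 0, V' s ≤ 2 * c * √(V s) - 2 * α * V s) {t : ℝ} (ht : 0 ≤ t) :
    √(V t) ≤ exp (-α * t) * √(V 0) + c / α := by
  -- `√V` need not be differentiable where `V` vanishes: compare `√(V + η)` instead, then `η → 0`.
  have hreg (η : ℝ) (hη : 0 < η) : √(V t) ≤ exp (-α * t) * √(V 0) + c / α + 2 * √η := by
    have hpos (s : ℝ) (hs : s ≥ 0) : 0 < V s + η := by linarith [hV_nonneg s hs]
    have hderiv (s : ℝ) (hs : s ≥ 0) :
        HasDerivAt (fun s => √(V s + η)) (V' s / (2 * √(V s + η))) s :=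
      ((hV s hs).add_const η).sqrt (hpos s hs).ne'
    have hbound (s : ℝ) (hs : s ≥ 0) :
        V' s / (2 * √(V s + η)) ≤ -α * √(V s + η) + (c + α * √η) := by
      have hW : 0 < √(V s + η) := Real.sqrt_pos.mpr (hpos s hs)
      have hVW : √(V s) ≤ √(V s + η) := Real.sqrt_le_sqrt (by linarith)
      have hηW : √η ≤ √(V s + η) := Real.sqrt_le_sqrt (by linarith [hV_nonneg s hs])
      rw [div_le_iff₀ (by positivity)]
      nlinarith [hV' s hs, Real.sq_sqrt (hpos s hs).le, Real.sq_sqrt hη.le,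
        mul_le_mul_of_nonneg_left hVW hc,
        mul_le_mul_of_nonneg_left hηW (mul_nonneg hα.le (Real.sqrt_nonneg η))]
    have hcomp := le_of_hasDerivAt_le_neg_mul_add hα.ne' hderiv hbound ht
    have hβ : (c + α * √η) / α = c / α + √η := by field_simp
    have hexp_pos := exp_pos (-α * t)
    have hexp_le : exp (-α * t) ≤ 1 := exp_le_one_iff.mpr (by nlinarith)
    have hsqrt_add : √(V 0 + η) ≤ √(V 0) + √η := by
      rw [Real.sqrt_le_left (by positivity)]
      nlinarith [Real.sq_sqrt (hV_nonneg 0 le_rfl), Real.sq_sqrt hη.le,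
        mul_nonneg (Real.sqrt_nonneg (V 0)) (Real.sqrt_nonneg η)]
    have hVt : √(V t) ≤ √(V t + η) := Real.sqrt_le_sqrt (by linarith)
    rw [hβ] at hcomp
    nlinarith [mul_le_mul_of_nonneg_left hsqrt_add hexp_pos.le,
      mul_le_of_le_one_left (Real.sqrt_nonneg η) hexp_le, div_nonneg hc hα.le,
      mul_nonneg hexp_pos.le (add_nonneg (div_nonneg hc hα.le) (Real.sqrt_nonneg η))]
  refine le_of_forall_pos_le_add fun ε hε => ?_
  have h := hreg ((ε / 2) ^ 2) (by positivity)
  rwa [Real.sqrt_sq (by positivity), mul_div_cancel₀ _ two_ne_zero] at h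

end Comparison

section Consensus

variable {E : Type*} [NormedAddCommGroup E] [InnerProductSpace ℝ E] {n : ℕ}

theorem sum_inner_deviation_deviation (x y : Fin n → E) :
    ∑ j, ⟪deviation x j, deviation y j⟫ = ∑ j, ⟪deviation x j, y j⟫ := by
  have h (j : Fin n) : ⟪deviation x j, deviation y j⟫ =
      ⟪deviation x j, y j⟫ - ⟪deviation x j, (n : ℝ)⁻¹ • ∑ i, y i⟫ :=
    inner_sub_right _ _ _
  rw [Finset.sum_congr rfl fun j _ => h j, Finset.sum_sub_distrib, ← sum_inner,
    sum_deviation_eq_zero, inner_zero_left, sub_zero]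

theorem hasDerivAt_sum_norm_sq_deviation {x : Fin n → ℝ → E} {x' : Fin n → E} {s : ℝ}
    (hx : ∀ j, HasDerivAt (x j) (x' j) s) :
    HasDerivAt (fun s => ∑ j, ‖deviation (fun i => x i s) j‖ ^ 2)
      (2 * ∑ j, ⟪deviation (fun i => x i s) j, x' j⟫) s := by
  have hdev (j : Fin n) :
      HasDerivAt (fun s => deviation (fun i => x i s) j) (deviation x' j) s :=
    (hx j).sub ((HasDerivAt.fun_sum fun i _ => hx i).const_smul _)
  rw [← sum_inner_deviation_deviation, Finset.mul_sum]
  exact HasDerivAt.fun_sum fun j _ => (hdev j).norm_sq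

theorem sum_inner_le_of_norm_le {M : ℝ} (x y : Fin n → E) (hy : ∀ j, ‖y j‖ ≤ M) :
    ∑ j, ⟪x j, y j⟫ ≤ √n * M * √(∑ j, ‖x j‖ ^ 2) := by
  rcases isEmpty_or_nonempty (Fin n) with _ | ⟨⟨j₀⟩⟩
  · simp
  have hM : 0 ≤ M := (norm_nonneg _).trans (hy j₀)
  have hcs : ∑ j, ‖x j‖ ≤ √n * √(∑ j, ‖x j‖ ^ 2) := by
    rw [← Real.sqrt_mul (Nat.cast_nonneg n)]
    refine (le_abs_self _).trans (Real.abs_le_sqrt ?_)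
    simpa using sq_sum_le_card_mul_sum_sq (s := Finset.univ) (f := fun j => ‖x j‖)
  calc ∑ j, ⟪x j, y j⟫ ≤ ∑ j, M * ‖x j‖ := Finset.sum_le_sum fun j _ =>
        (real_inner_le_norm _ _).trans (by rw [mul_comm]; gcongr; exact hy j)
    _ ≤ M * (√n * √(∑ j, ‖x j‖ ^ 2)) := by rw [← Finset.mul_sum]; gcongr
    _ = √n * M * √(∑ j, ‖x j‖ ^ 2) := by ring

theorem sum_inner_deviation_diffusion_le [FiniteDimensional ℝ E] {a : Fin n → Fin n → ℝ}
    (ha_nonneg : ∀ j k, 0 ≤ a j k) (ha_symm : ∀ j k, a j k = a k j) (ha_diag : ∀ j, a j j = 0)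
    (ha_conn : (SimpleGraph.fromRel fun j k => 0 < a j k).Connected) {lam : ℝ}
    (hlam : lam ∈ lowerBounds {r : ℝ | r ≠ 0 ∧ ∃ w : Fin n → ℝ, w ≠ 0 ∧ lap a *ᵥ w = r • w})
    (x : Fin n → E) :
    ∑ j, ⟪deviation x j, diffusion a x j⟫ ≤ -lam * ∑ j, ‖deviation x j‖ ^ 2 := by
  rw [← diffusion_deviation, sum_inner_diffusion ha_symm]
  have := lam_mul_sum_norm_sq_le_of_sum_eq_zero ha_nonneg ha_symm ha_diag ha_conn hlam
    (sum_deviation_eq_zero x)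
  linarith

open Real in
theorem sqrt_sum_norm_sq_deviation_le [FiniteDimensional ℝ E] {a : Fin n → Fin n → ℝ}
    (ha_nonneg : ∀ j k, 0 ≤ a j k) (ha_symm : ∀ j k, a j k = a k j) (ha_diag : ∀ j, a j j = 0)
    (ha_conn : (SimpleGraph.fromRel fun j k => 0 < a j k).Connected) {lam : ℝ}
    (hlam_pos : 0 < lam)
    (hlam : lam ∈ lowerBounds {r : ℝ | r ≠ 0 ∧ ∃ w : Fin n → ℝ, w ≠ 0 ∧ lap a *ᵥ w = r • w})
    {K M : ℝ} (hK : 0 < K) {x f : Fin n → ℝ → E} (hf : ∀ j, ∀ s ≥ 0, ‖f j s‖ ≤ M)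
    (hx : ∀ j, ∀ s ≥ 0, HasDerivAt (x j) (f j s + K • diffusion a (fun i => x i s) j) s)
    {t : ℝ} (ht : 0 ≤ t) :
    √(∑ j, ‖deviation (fun i => x i t) j‖ ^ 2) ≤
      exp (-(K * lam) * t) * √(∑ j, ‖deviation (fun i => x i 0) j‖ ^ 2) + √n * M / (K * lam) := by
  obtain ⟨j₀⟩ := ha_conn.nonempty
  have hM : 0 ≤ M := (norm_nonneg _).trans (hf j₀ 0 le_rfl)
  refine sqrt_le_of_hasDerivAt_le (mul_pos hK hlam_pos) (by positivity) (fun s _ => by positivity)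
    (fun s hs => hasDerivAt_sum_norm_sq_deviation fun j => hx j s hs) (fun s hs => ?_) ht
  have hforce := sum_inner_le_of_norm_le (deviation fun i => x i s) _ fun j => hf j s hs
  have hcoupling := sum_inner_deviation_diffusion_le ha_nonneg ha_symm ha_diag ha_conn hlam
    fun i => x i s
  simp only [inner_add_right, inner_smul_right, Finset.sum_add_distrib, ← Finset.mul_sum]
  nlinarith

end Consensus

section FrobeniusNorm

variable {m p : Type*}

theorem Matrix.frobenius_norm_eq_sqrt [Fintype m] [Fintype p] {α : Type*}
    [SeminormedAddCommGroup α] (A : Matrix m p α) : ‖A‖ = √(∑ i, ∑ j, ‖A i j‖ ^ 2) := by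
  simp [frobenius_norm_def, Real.sqrt_eq_rpow]

def Matrix.frobeniusIsometry [Fintype m] [Fintype p] {𝕜 : Type*} [RCLike 𝕜] :
    Matrix m p 𝕜 →ₗᵢ[ℝ] EuclideanSpace 𝕜 (m × p) where
  toFun A := WithLp.toLp 2 fun q => A q.1 q.2
  map_add' _ _ := rfl
  map_smul' _ _ := rfl
  norm_map' A := by
    rw [EuclideanSpace.norm_eq, frobenius_norm_eq_sqrt, Fintype.sum_prod_type]
    rfl

theorem Matrix.PosSemidef.norm_sq_apply_le {A : Matrix m m ℂ} (hA : A.PosSemidef) (i j : m) :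
    ‖A i j‖ ^ 2 ≤ (A i i).re * (A j j).re := by
  have hdet := (hA.submatrix ![i, j]).det_nonneg
  rw [det_fin_two] at hdet
  simp only [submatrix_apply, Matrix.cons_val_zero, Matrix.cons_val_one, sub_nonneg] at hdet
  rw [← hA.1.apply j i, ← hA.1.coe_re_apply_self i, ← hA.1.coe_re_apply_self j,
    Complex.star_def, Complex.mul_conj] at hdet
  rw [Complex.sq_norm, ← Complex.real_le_real]
  simpa using hdet

theorem Matrix.PosSemidef.frobenius_norm_le_re_trace [Fintype m] {A : Matrix m m ℂ}
    (hA : A.PosSemidef) : ‖A‖ ≤ A.trace.re := by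
  have htr : 0 ≤ A.trace.re := by simpa using (Complex.le_def.mp hA.trace_nonneg).1
  rw [← Real.sqrt_sq htr, frobenius_norm_eq_sqrt]
  refine Real.sqrt_le_sqrt ?_
  calc ∑ i, ∑ j, ‖A i j‖ ^ 2 ≤ ∑ i, ∑ j, (A i i).re * (A j j).re :=
        Finset.sum_le_sum fun i _ => Finset.sum_le_sum fun j _ => hA.norm_sq_apply_le i j
    _ = A.trace.re ^ 2 := by rw [sq, trace, Complex.re_sum, Finset.sum_mul_sum]; rfl

end FrobeniusNorm

theorem stmt15_general {n : ℕ} {ι : Type} [Fintype ι] (hbar : ℝ)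
    (γ : ι → ℝ)
    (H : Fin n → Mat2)
    (L : ι → Fin n → Mat2)
    -- symmetric nonnegative weights with zero diagonal and connected graph
    (a : Fin n → Fin n → ℝ) (ha_nonneg : ∀ j k, 0 ≤ a j k)
    (ha_symm : ∀ j k, a j k = a k j) (ha_diag : ∀ j, a j j = 0)
    (ha_conn : (SimpleGraph.fromRel fun j k => 0 < a j k).Connected)
    -- `lam` is the smallest nonzero eigenvalue of the Laplacian
    (lam : ℝ) (hlam_pos : 0 < lam)
    (hlam : IsLeast {r : ℝ | r ≠ 0 ∧ ∃ v : Fin n → ℝ, v ≠ 0 ∧ (lap a).mulVec v = r • v} lam)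
    -- `nL` is the maximum over `j` of the operator norm of `ℒ_j` w.r.t. the Frobenius norm,
    -- i.e. the least uniform Lipschitz bound of the local generators
    (nL : ℝ)
    (hnL : IsLeast {c : ℝ | 0 ≤ c ∧ ∀ (j : Fin n) (X : Mat2),
      ‖lind hbar (H j) γ (fun l => L l j) X‖ ≤ c * ‖X‖} nL)
    -- a `K`-solution of the coupled reduced-state system
    (K : ℝ) (hK : 0 < K)
    (ρ : Fin n → ℝ → Mat2)
    (hden : ∀ j, ∀ t ≥ (0 : ℝ), (ρ j t).PosSemidef ∧ (ρ j t).trace = 1)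
    (hode : ∀ j, ∀ t ≥ (0 : ℝ), HasDerivAt (ρ j)
      (lind hbar (H j) γ (fun l => L l j) (ρ j t) + K • ∑ k, a j k • (ρ k t - ρ j t)) t) :
    ∀ t ≥ (0 : ℝ),
      Real.sqrt (∑ j, ‖ρ j t - (n : ℝ)⁻¹ • ∑ i, ρ i t‖ ^ 2) ≤
        Real.exp (-(K * lam) * t) * Real.sqrt (∑ j, ‖ρ j 0 - (n : ℝ)⁻¹ • ∑ i, ρ i 0‖ ^ 2) +
          n * nL / (K * lam) := by
  intro t ht
  let Φ : Mat2 →ₗᵢ[ℝ] EuclideanSpace ℂ (Fin 2 × Fin 2) := Matrix.frobeniusIsometry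
  have hbound (j : Fin n) (s : ℝ) (hs : s ≥ 0) :
      ‖Φ (lind hbar (H j) γ (fun l => L l j) (ρ j s))‖ ≤ nL := by
    have hρ : ‖ρ j s‖ ≤ 1 := by
      simpa [(hden j s hs).2] using (hden j s hs).1.frobenius_norm_le_re_trace
    rw [Φ.norm_map]
    exact (hnL.1.2 j _).trans (mul_le_of_le_one_right hnL.1.1 hρ)
  have hderiv (j : Fin n) (s : ℝ) (hs : s ≥ 0) : HasDerivAt (fun s => Φ (ρ j s))
      (Φ (lind hbar (H j) γ (fun l => L l j) (ρ j s)) + K • diffusion a (fun i => Φ (ρ i s)) j) s :=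
    (Φ.toContinuousLinearMap.hasFDerivAt.comp_hasDerivAt s (hode j s hs)).congr_deriv
      (by simp [diffusion])
  have hdev (s : ℝ) : ∑ j, ‖deviation (fun i => Φ (ρ i s)) j‖ ^ 2 =
      ∑ j, ‖ρ j s - (n : ℝ)⁻¹ • ∑ i, ρ i s‖ ^ 2 := by
    simp [deviation, ← map_sum, ← map_smul, ← map_sub]
  have hsqrt : √(n : ℝ) ≤ n :=
    (Real.sqrt_le_left (Nat.cast_nonneg n)).mpr (by exact_mod_cast Nat.le_self_pow two_ne_zero n)
  have key := sqrt_sum_norm_sq_deviation_le ha_nonneg ha_symm ha_diag ha_conn hlam_pos hlam.2 hK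
    hbound hderiv ht
  rw [hdev, hdev] at key
  have hnL0 : 0 ≤ nL := hnL.1.1
  exact key.trans (by gcongr)

theorem stmt15 {n : ℕ} (hn : 2 ≤ n) {ι : Type} [Fintype ι] (hbar : ℝ) (hhbar : 0 < hbar)
    (γ : ι → ℝ) (hγ : ∀ l, 0 < γ l)
    (H : Fin n → Mat2) (hH : ∀ j, (H j).IsHermitian)
    (L : ι → Fin n → Mat2)
    -- symmetric nonnegative weights with zero diagonal and connected graph
    (a : Fin n → Fin n → ℝ) (ha_nonneg : ∀ j k, 0 ≤ a j k)
    (ha_symm : ∀ j k, a j k = a k j) (ha_diag : ∀ j, a j j = 0)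
    (ha_conn : (SimpleGraph.fromRel fun j k => 0 < a j k).Connected)
    -- `lam` is the smallest nonzero eigenvalue of the Laplacian
    (lam : ℝ) (hlam_pos : 0 < lam)
    (hlam : IsLeast {r : ℝ | r ≠ 0 ∧ ∃ v : Fin n → ℝ, v ≠ 0 ∧ (lap a).mulVec v = r • v} lam)
    -- `nL` is the maximum over `j` of the operator norm of `ℒ_j` w.r.t. the Frobenius norm,
    -- i.e. the least uniform Lipschitz bound of the local generators
    (nL : ℝ)
    (hnL : IsLeast {c : ℝ | 0 ≤ c ∧ ∀ (j : Fin n) (X : Mat2),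
      ‖lind hbar (H j) γ (fun l => L l j) X‖ ≤ c * ‖X‖} nL)
    -- a `K`-solution of the coupled reduced-state system
    (K : ℝ) (hK : 0 < K)
    (ρ : Fin n → ℝ → Mat2)
    (hden : ∀ j, ∀ t ≥ (0 : ℝ), (ρ j t).PosSemidef ∧ (ρ j t).trace = 1)
    (hode : ∀ j, ∀ t ≥ (0 : ℝ), HasDerivAt (ρ j)
      (lind hbar (H j) γ (fun l => L l j) (ρ j t) + K • ∑ k, a j k • (ρ k t - ρ j t)) t) :
    ∀ t ≥ (0 : ℝ),
      Real.sqrt (∑ j, ‖ρ j t - (n : ℝ)⁻¹ • ∑ i, ρ i t‖ ^ 2) ≤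
        Real.exp (-(K * lam) * t) * Real.sqrt (∑ j, ‖ρ j 0 - (n : ℝ)⁻¹ • ∑ i, ρ i 0‖ ^ 2) +
          n * nL / (K * lam) :=
  stmt15_general hbar γ H L a ha_nonneg ha_symm ha_diag ha_conn lam hlam_pos hlam nL hnL K hK ρ hden
    hode
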